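/- Consider the IBCD update: for each i = 1,…,n, xᵢᵗ⁺¹ = xᵗ − γ(∇fᵢ(xᵗ))_{Uᵢ} with U₁,…,Uₙ independent uniform size-τm block subsets, and xᵗ⁺¹ = (1/n)∑ᵢxᵢᵗ⁺¹. If each fᵢ is convex and L-smooth, f = (1/n)∑ᵢfᵢ is μ-strongly convex, ∇fᵢ(x*) = 0 for all i where x* minimizes f, and γ = n/((τn + 2(1−τ))·2L), then E‖xᵗ⁺¹ − x*‖² ≤ (1 − (μ/(2L))·τn/(τn + 2(1−τ)))‖xᵗ − x*‖². -/

import Mathlib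

open Finset
open scoped RealInnerProductSpace

/-- `x_U`: keep the coordinates of `x` lying in blocks of `U`, zero the rest. -/
noncomputable def restr {d m : ℕ} (b : Fin d → Fin m) (U : Finset (Fin m))
    (x : EuclideanSpace ℝ (Fin d)) : EuclideanSpace ℝ (Fin d) :=
  (WithLp.equiv 2 (Fin d → ℝ)).symm (fun j => if b j ∈ U then x j else 0)

/-!
Fix a coordinate `j`. The indicators `1[b j ∈ Uᵢ]` are independent over `i`, each with mean
`τ = k / m`, so with `a = xᵗ - x*`, `gᵢ = ∇fᵢ(xᵗ)` and `v = ∑ gᵢ` the mean of the squared error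
is exactly `‖a‖² - 2(γ/n)τ⟪a, v⟫ + (γ/n)²(τ²‖v‖² + τ(1-τ)∑‖gᵢ‖²)`. Now use three bounds:
`‖v‖² ≤ n∑‖gᵢ‖²`; `‖gᵢ‖² ≤ 2L(fᵢ(xᵗ) - fᵢ(x*))`, which follows from smoothness and from `x*`
minimising `fᵢ`; and the lower bound on `⟪a, v⟫` given by strong convexity of `f`. With this step
size the function-value gaps drop out, and only the contraction factor in front of `‖a‖²` is left.
-/

open scoped BigOperators

section
variable {ι κ K : Type*} [Fintype ι] [DecidableEq ι] [Field K] [CharZero K]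

theorem expect_piFinset_prod (s : ι → Finset κ) (f : ι → κ → K) :
    𝔼 p ∈ Fintype.piFinset s, ∏ i, f i (p i) = ∏ i, 𝔼 x ∈ s i, f i x := by
  simp only [Finset.expect_eq_sum_div_card, ← prod_univ_sum, Fintype.card_piFinset,
    Nat.cast_prod, prod_div_distrib]

variable {s : Finset κ}

theorem expect_piFinset_prod_subset (hs : s.Nonempty) (t : Finset ι) (f : ι → κ → K) :
    𝔼 p ∈ Fintype.piFinset fun _ => s, ∏ i ∈ t, f i (p i) = ∏ i ∈ t, 𝔼 x ∈ s, f i x := by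
  have h := expect_piFinset_prod (fun _ => s) fun i x => if i ∈ t then f i x else 1
  simp only [Fintype.prod_ite_mem] at h
  refine (h.trans ?_).trans (Fintype.prod_ite_mem t _)
  exact prod_congr rfl fun i _ => by split_ifs <;> simp [expect_const hs]

theorem expect_piFinset_apply (hs : s.Nonempty) (φ : κ → K) (i : ι) :
    𝔼 p ∈ Fintype.piFinset fun _ => s, φ (p i) = 𝔼 x ∈ s, φ x := by
  simpa using expect_piFinset_prod_subset hs {i} fun _ => φ

theorem expect_piFinset_mul_apply (hs : s.Nonempty) (φ ψ : κ → K) {i i' : ι} (hi : i ≠ i') :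
    𝔼 p ∈ Fintype.piFinset fun _ => s, φ (p i) * ψ (p i') = (𝔼 x ∈ s, φ x) * 𝔼 x ∈ s, ψ x := by
  simpa [prod_pair hi, hi.symm] using
    expect_piFinset_prod_subset hs {i, i'} fun j => if j = i then φ else ψ

theorem expect_piFinset_sum_apply (hs : s.Nonempty) (φ : ι → κ → K) :
    𝔼 p ∈ Fintype.piFinset fun _ => s, ∑ i, φ i (p i) = ∑ i, 𝔼 x ∈ s, φ i x := by
  rw [expect_sum_comm]
  exact sum_congr rfl fun i _ => expect_piFinset_apply hs (φ i) i

theorem expect_piFinset_sq_sum_apply (hs : s.Nonempty) (φ : ι → κ → K) :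
    𝔼 p ∈ Fintype.piFinset fun _ => s, (∑ i, φ i (p i)) ^ 2
      = (∑ i, 𝔼 x ∈ s, φ i x) ^ 2 + ∑ i, (𝔼 x ∈ s, φ i x ^ 2 - (𝔼 x ∈ s, φ i x) ^ 2) := by
  have hpair (i j : ι) : 𝔼 p ∈ Fintype.piFinset (fun _ => s), φ i (p i) * φ j (p j)
      = (𝔼 x ∈ s, φ i x) * (𝔼 x ∈ s, φ j x)
        + if i = j then 𝔼 x ∈ s, φ i x ^ 2 - (𝔼 x ∈ s, φ i x) ^ 2 else 0 := by
    by_cases h : i = j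
    · subst h
      rw [if_pos rfl, ← sq, add_sub_cancel]
      have hsq := expect_piFinset_apply hs (fun x => φ i x ^ 2) i
      simp only [sq] at hsq ⊢
      exact hsq
    · simp only [expect_piFinset_mul_apply hs _ _ h, if_neg h, add_zero]
  simp only [sq, sum_mul_sum, expect_sum_comm, hpair, sum_add_distrib, sum_ite_eq, mem_univ,
    if_true]

end

section
variable {α K : Type*} [DecidableEq α] {t : Finset α} {a : α}

theorem card_filter_mem_powersetCard_mul_card (ha : a ∈ t) (k : ℕ) :
    #{u ∈ t.powersetCard k | a ∈ u} * #t = k * (#t).choose k := by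
  cases k with
  | zero => simp
  | succ j =>
    have h := card_filter_powersetCard_subset {a} t (j + 1) (singleton_subset_iff.2 ha) (by simp)
    simp only [singleton_subset_iff, card_singleton, add_tsub_cancel_right] at h
    obtain ⟨r, hr⟩ : ∃ r, #t = r + 1 := ⟨#t - 1, by have := card_pos.2 ⟨a, ha⟩; omega⟩
    rw [h, hr, add_tsub_cancel_right, mul_comm, Nat.add_one_mul_choose_eq, mul_comm]

variable [Field K] [CharZero K]

theorem expect_powersetCard_ite_mem (ha : a ∈ t) {k : ℕ} (hk : k ≤ #t) (y : K) :
    𝔼 u ∈ t.powersetCard k, (if a ∈ u then y else 0) = k / #t * y := by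
  have hcount : (#{u ∈ t.powersetCard k | a ∈ u} : K) * #t = k * (#t).choose k := by
    exact_mod_cast card_filter_mem_powersetCard_mul_card ha k
  have hchoose : ((#t).choose k : K) ≠ 0 := Nat.cast_ne_zero.2 (Nat.choose_pos hk).ne'
  have ht : (#t : K) ≠ 0 := Nat.cast_ne_zero.2 (card_pos.2 ⟨a, ha⟩).ne'
  rw [expect_eq_sum_div_card, ← sum_filter, sum_const, nsmul_eq_mul, card_powersetCard]
  field_simp
  linear_combination y * hcount

theorem expect_sq_sub_mul_sum_ite_mem {ι : Type*} [Fintype ι] [DecidableEq ι] (ha : a ∈ t)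
    {k : ℕ} (hk : k ≤ #t) (x c : K) (y : ι → K) :
    𝔼 p ∈ Fintype.piFinset fun _ : ι => t.powersetCard k,
        (x - c * ∑ i, if a ∈ p i then y i else 0) ^ 2
      = x ^ 2 - 2 * c * (k / #t) * ((∑ i, y i) * x)
        + c ^ 2 * ((k / #t) ^ 2 * (∑ i, y i) ^ 2 + k / #t * (1 - k / #t) * ∑ i, y i ^ 2) := by
  have hs : (t.powersetCard k).Nonempty := powersetCard_nonempty.2 hk
  have hsq (u : Finset α) (i : ι) :
      (if a ∈ u then y i else 0) ^ 2 = if a ∈ u then y i ^ 2 else 0 := by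
    split_ifs <;> simp
  have hps := Fintype.piFinset_nonempty.2 fun _ : ι => hs
  simp only [sub_sq, expect_add_distrib, expect_sub_distrib, expect_const hps, ← mul_expect,
    mul_pow, expect_piFinset_sum_apply hs fun i u => if a ∈ u then y i else 0,
    expect_piFinset_sq_sum_apply hs fun i u => if a ∈ u then y i else 0, hsq,
    expect_powersetCard_ite_mem ha hk, ← mul_sum]
  rw [sum_sub_distrib, ← mul_sum, ← mul_sum]
  ring

end

theorem inv_smul_sum_sub_smul_sub {E : Type*} [AddCommGroup E] [Module ℝ E] {n : ℕ}
    (hn : n ≠ 0) (x y : E) (γ : ℝ) (r : Fin n → E) :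
    (n : ℝ)⁻¹ • (∑ i, (x - γ • r i)) - y = (x - y) - (γ / n) • ∑ i, r i := by
  rw [sum_sub_distrib, sum_const, card_univ, Fintype.card_fin, ← smul_sum, smul_sub,
    ← Nat.cast_smul_eq_nsmul ℝ, smul_smul, smul_smul, inv_mul_cancel₀ (by exact_mod_cast hn),
    one_smul, div_eq_inv_mul]
  abel

theorem restr_apply {d m : ℕ} (b : Fin d → Fin m) (U : Finset (Fin m))
    (x : EuclideanSpace ℝ (Fin d)) (j : Fin d) :
    restr b U x j = if b j ∈ U then x j else 0 := rfl

theorem expect_norm_sq_sub_smul_sum_restr {ι : Type*} [Fintype ι] [DecidableEq ι] {d m : ℕ}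
    (b : Fin d → Fin m) {k : ℕ} (hk : k ≤ m)
    (a : EuclideanSpace ℝ (Fin d)) (c : ℝ) (g : ι → EuclideanSpace ℝ (Fin d)) :
    𝔼 U ∈ Fintype.piFinset fun _ : ι => powersetCard k univ,
        ‖a - c • ∑ i, restr b (U i) (g i)‖ ^ 2
      = ‖a‖ ^ 2 - 2 * c * (k / m) * ⟪a, ∑ i, g i⟫
        + c ^ 2 * ((k / m) ^ 2 * ‖∑ i, g i‖ ^ 2 + k / m * (1 - k / m) * ∑ i, ‖g i‖ ^ 2) := by
  have hk' : k ≤ #(univ : Finset (Fin m)) := by simpa using hk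
  simp only [EuclideanSpace.real_norm_sq_eq, PiLp.sub_apply, PiLp.smul_apply, WithLp.ofLp_sum,
    Finset.sum_apply, restr_apply, smul_eq_mul, expect_sum_comm,
    expect_sq_sub_mul_sum_ite_mem (mem_univ _) hk', PiLp.inner_apply, card_univ,
    Fintype.card_fin, RCLike.inner_apply, conj_trivial]
  rw [sum_comm (γ := ι)]
  simp only [sum_add_distrib, sum_sub_distrib, ← mul_sum]

theorem norm_sq_le_of_smooth_of_isMin {E : Type*} [NormedAddCommGroup E] [InnerProductSpace ℝ E]
    {f : E → ℝ} {g : E → E} {L : ℝ} (hL : 0 < L)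
    (hsmooth : ∀ x y, f x ≤ f y + ⟪g y, x - y⟫ + L / 2 * ‖x - y‖ ^ 2)
    {x₀ : E} (hmin : ∀ z, f x₀ ≤ f z) (x : E) :
    ‖g x‖ ^ 2 ≤ 2 * L * (f x - f x₀) := by
  have hstep := (hmin _).trans (hsmooth (x - L⁻¹ • g x) x)
  rw [sub_sub_cancel_left, inner_neg_right, norm_neg, real_inner_smul_right,
    real_inner_self_eq_norm_sq, norm_smul, mul_pow, Real.norm_of_nonneg (inv_nonneg.2 hL.le)]
    at hstep
  have hdesc : ‖g x‖ ^ 2 / (2 * L) ≤ f x - f x₀ := by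
    field_simp at hstep ⊢
    linarith
  rwa [div_le_iff₀ (by positivity), mul_comm] at hdesc

theorem norm_sum_sq_le_card_mul {ι E : Type*} [SeminormedAddCommGroup E] (s : Finset ι)
    (g : ι → E) :
    ‖∑ i ∈ s, g i‖ ^ 2 ≤ #s * ∑ i ∈ s, ‖g i‖ ^ 2 :=
  (pow_le_pow_left₀ (norm_nonneg _) (norm_sum_le _ _) 2).trans sq_sum_le_card_mul_sum_sq

theorem sum_sub_add_le_inner_of_strongConvex {E : Type*} [NormedAddCommGroup E]
    [InnerProductSpace ℝ E] {n : ℕ} (hn : 0 < n) {f : Fin n → E → ℝ} {G : Fin n → E → E} {μ : ℝ}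
    (hsc : ∀ x y : E, (n : ℝ)⁻¹ * ∑ i, f i x
      ≥ (n : ℝ)⁻¹ * ∑ i, f i y + ⟪(n : ℝ)⁻¹ • ∑ i, G i y, x - y⟫ + μ / 2 * ‖x - y‖ ^ 2)
    (x x₀ : E) :
    ∑ i, (f i x - f i x₀) + n * μ / 2 * ‖x - x₀‖ ^ 2 ≤ ⟪x - x₀, ∑ i, G i x⟫ := by
  have h := hsc x₀ x
  rw [real_inner_smul_left, ← neg_sub x x₀, inner_neg_right, norm_neg, real_inner_comm] at h
  have h' := mul_le_mul_of_nonneg_left h (Nat.cast_nonneg n : (0 : ℝ) ≤ n)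
  field_simp at h'
  rw [sum_sub_distrib]
  linarith

theorem contraction_of_moment_bounds {n τ L μ γ A P V S F : ℝ} (hn : 1 ≤ n) (hτ0 : 0 ≤ τ)
    (hτ1 : τ ≤ 1) (hL : 0 < L) (hγ : γ = n / ((τ * n + 2 * (1 - τ)) * (2 * L)))
    (hV : V ≤ n * S) (hS0 : 0 ≤ S) (hS : S ≤ 2 * L * F) (hP : F + n * μ / 2 * A ≤ P) :
    A - 2 * (γ / n) * τ * P + (γ / n) ^ 2 * (τ ^ 2 * V + τ * (1 - τ) * S)
      ≤ (1 - μ / (2 * L) * (τ * n / (τ * n + 2 * (1 - τ)))) * A := by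
  set β := τ * n + 2 * (1 - τ)
  have hτn : τ ≤ τ * n := le_mul_of_one_le_right hτ0 hn
  have hβ : 0 < β := by linarith
  set c := γ / n with hc
  have hcβ : c * (2 * L * β) = 1 := by
    rw [hc, hγ]; field_simp
  have hc0 : 0 ≤ c := by rw [hc, hγ]; positivity
  have hF : 0 ≤ F := by nlinarith
  have hmom : τ ^ 2 * V + τ * (1 - τ) * S ≤ τ * (τ * n + 1 - τ) * (2 * L * F) := by
    calc τ ^ 2 * V + τ * (1 - τ) * S ≤ τ ^ 2 * (n * S) + τ * (1 - τ) * S := by gcongr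
      _ = τ * (τ * n + 1 - τ) * S := by ring
      _ ≤ τ * (τ * n + 1 - τ) * (2 * L * F) :=
        mul_le_mul_of_nonneg_left hS (mul_nonneg hτ0 (by linarith))
  have hrate : c * L * (τ * n + 1 - τ) ≤ 1 := by nlinarith
  calc A - 2 * c * τ * P + c ^ 2 * (τ ^ 2 * V + τ * (1 - τ) * S)
      ≤ A - 2 * c * τ * (F + n * μ / 2 * A) + c ^ 2 * (τ * (τ * n + 1 - τ) * (2 * L * F)) := by
        gcongr
    _ = A - c * τ * n * μ * A - 2 * c * τ * F * (1 - c * L * (τ * n + 1 - τ)) := by ring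
    _ ≤ A - c * τ * n * μ * A := by
        have : 0 ≤ 2 * c * τ * F * (1 - c * L * (τ * n + 1 - τ)) := by
          have : 0 ≤ 1 - c * L * (τ * n + 1 - τ) := by linarith
          positivity
        linarith
    _ = (1 - μ / (2 * L) * (τ * n / β)) * A := by
        rw [show c = 1 / (2 * L * β) by field_simp; linarith]
        field_simp

theorem stmt14_general {d m n : ℕ} (hn : 0 < n) (b : Fin d → Fin m)
    (k : ℕ) (hkm : k ≤ m)
    (L μ τ γ : ℝ) (hL : 0 < L) (hτ : τ = (k : ℝ) / m)
    (hγ : γ = (n : ℝ) / ((τ * n + 2 * (1 - τ)) * (2 * L)))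
    (f : Fin n → EuclideanSpace ℝ (Fin d) → ℝ)
    (G : Fin n → EuclideanSpace ℝ (Fin d) → EuclideanSpace ℝ (Fin d))
    (hconv : ∀ i, ∀ x y : EuclideanSpace ℝ (Fin d),
      f i x ≥ f i y + ⟪G i y, x - y⟫)
    (hsmooth : ∀ i, ∀ x y : EuclideanSpace ℝ (Fin d),
      f i x ≤ f i y + ⟪G i y, x - y⟫ + L / 2 * ‖x - y‖ ^ 2)
    (hsc : ∀ x y : EuclideanSpace ℝ (Fin d),
      (n : ℝ)⁻¹ * ∑ i, f i x
        ≥ (n : ℝ)⁻¹ * ∑ i, f i y + ⟪(n : ℝ)⁻¹ • ∑ i, G i y, x - y⟫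
          + μ / 2 * ‖x - y‖ ^ 2)
    (xstar : EuclideanSpace ℝ (Fin d)) (hzero : ∀ i, G i xstar = 0)
    (xt : EuclideanSpace ℝ (Fin d)) :
    ((m.choose k : ℝ))⁻¹ ^ n *
      ∑ U ∈ Fintype.piFinset
          (fun _ : Fin n => Finset.powersetCard k (Finset.univ : Finset (Fin m))),
        ‖(n : ℝ)⁻¹ • (∑ i, (xt - γ • restr b (U i) (G i xt))) - xstar‖ ^ 2
      ≤ (1 - μ / (2 * L) * (τ * n / (τ * n + 2 * (1 - τ)))) * ‖xt - xstar‖ ^ 2 := by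
  have hn1 : (1 : ℝ) ≤ n := by exact_mod_cast hn
  have hτ0 : 0 ≤ τ := by rw [hτ]; positivity
  have hτ1 : τ ≤ 1 := by
    rw [hτ]; exact div_le_one_of_le₀ (by exact_mod_cast hkm) (by positivity)
  have hmin (i : Fin n) (z : EuclideanSpace ℝ (Fin d)) : f i xstar ≤ f i z := by
    simpa [hzero] using hconv i z xstar
  have hgrad : ∑ i, ‖G i xt‖ ^ 2 ≤ 2 * L * ∑ i, (f i xt - f i xstar) := by
    rw [mul_sum]
    exact sum_le_sum fun i _ => norm_sq_le_of_smooth_of_isMin hL (hsmooth i) (hmin i) xt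
  calc _ = 𝔼 U ∈ Fintype.piFinset fun _ : Fin n => powersetCard k univ,
          ‖(xt - xstar) - (γ / n) • ∑ i, restr b (U i) (G i xt)‖ ^ 2 := by
        rw [expect_eq_sum_div_card, Fintype.card_piFinset_const, card_powersetCard, card_univ,
          Fintype.card_fin, div_eq_inv_mul, inv_pow]
        push_cast
        simp only [inv_smul_sum_sub_smul_sub hn.ne']
    _ = _ := expect_norm_sq_sub_smul_sum_restr b hkm _ _ _
    _ ≤ _ := by
        rw [← hτ]
        refine contraction_of_moment_bounds hn1 hτ0 hτ1 hL hγ ?_ (by positivity) hgrad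
          (sum_sub_add_le_inner_of_strongConvex hn hsc xt xstar)
        simpa using norm_sum_sq_le_card_mul univ fun i => G i xt

/-- One step of IBCD: `xᵢᵗ⁺¹ = xᵗ − γ(∇fᵢ(xᵗ))_{Uᵢ}` with independent uniform
size-`τm` block subsets `Uᵢ` (encoded by averaging over all tuples), and
`xᵗ⁺¹ = (1/n)∑ᵢxᵢᵗ⁺¹`. If each `fᵢ` is convex and `L`-smooth, `f = (1/n)∑ᵢfᵢ` is
`μ`-strongly convex, `∇fᵢ(x*) = 0` for all `i`, and
`γ = n/((τn + 2(1−τ))·2L)`, then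
`E‖xᵗ⁺¹ − x*‖² ≤ (1 − (μ/(2L))·τn/(τn + 2(1−τ)))‖xᵗ − x*‖²`. -/
theorem stmt14 {d m n : ℕ} (hn : 0 < n) (b : Fin d → Fin m)
    (k : ℕ) (hk : 0 < k) (hkm : k ≤ m)
    (L μ τ γ : ℝ) (hL : 0 < L) (hμ : 0 < μ) (hτ : τ = (k : ℝ) / m)
    (hγ : γ = (n : ℝ) / ((τ * n + 2 * (1 - τ)) * (2 * L)))
    (f : Fin n → EuclideanSpace ℝ (Fin d) → ℝ)
    (G : Fin n → EuclideanSpace ℝ (Fin d) → EuclideanSpace ℝ (Fin d))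
    (hconv : ∀ i, ∀ x y : EuclideanSpace ℝ (Fin d),
      f i x ≥ f i y + ⟪G i y, x - y⟫)
    (hsmooth : ∀ i, ∀ x y : EuclideanSpace ℝ (Fin d),
      f i x ≤ f i y + ⟪G i y, x - y⟫ + L / 2 * ‖x - y‖ ^ 2)
    (hsc : ∀ x y : EuclideanSpace ℝ (Fin d),
      (n : ℝ)⁻¹ * ∑ i, f i x
        ≥ (n : ℝ)⁻¹ * ∑ i, f i y + ⟪(n : ℝ)⁻¹ • ∑ i, G i y, x - y⟫
          + μ / 2 * ‖x - y‖ ^ 2)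
    (xstar : EuclideanSpace ℝ (Fin d)) (hzero : ∀ i, G i xstar = 0)
    (xt : EuclideanSpace ℝ (Fin d)) :
    ((m.choose k : ℝ))⁻¹ ^ n *
      ∑ U ∈ Fintype.piFinset
          (fun _ : Fin n => Finset.powersetCard k (Finset.univ : Finset (Fin m))),
        ‖(n : ℝ)⁻¹ • (∑ i, (xt - γ • restr b (U i) (G i xt))) - xstar‖ ^ 2
      ≤ (1 - μ / (2 * L) * (τ * n / (τ * n + 2 * (1 - τ)))) * ‖xt - xstar‖ ^ 2 :=
  stmt14_general hn b k hkm L μ τ γ hL hτ hγ f G hconv hsmooth hsc xstar hzero xt
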